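/- arXiv:1808.04587 — 4 statements merged into one kernel-verified Lean document; each statement's English description precedes it below -/
import Mathlib

section
/- Let 𝒜^τ be the fixed-point subalgebra of τ in 𝒜, and set G^τ_{α,m} = G_{α,m} − G_{−α,m}. Then for all α, β, m, n ∈ ℤ: [G^τ_{α,m}, G^τ_{β,n}] = δ_{m−α, n+β} G^τ_{α+β, n+α} − δ_{m+α, n−β} G^τ_{α+β, β+m} + δ_{m+α, n+β} G^τ_{α−β, m−β} − δ_{m−α, n−β} G^τ_{α−β, α+n}. -/
noncomputable section

/-- `gl_∞`: doubly infinite complex matrices with finitely many nonzero entries,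
encoded as finitely supported functions on `ℤ × ℤ`. -/
abbrev glInf : Type := (ℤ × ℤ) →₀ ℂ

/-- The matrix unit `E_{m,n}`. -/
def E (m n : ℤ) : glInf := Finsupp.single (m, n) 1

/-- Matrix multiplication on `gl_∞`. -/
def glMul (a b : glInf) : glInf :=
  a.sum fun p c => b.sum fun q d =>
    if p.2 = q.1 then Finsupp.single (p.1, q.2) (c * d) else 0

/-- The commutator Lie bracket `[a,b] = ab - ba`. -/
def glBracket (a b : glInf) : glInf := glMul a b - glMul b a

/-- The trace of a finite-support matrix. -/
def glTr (a : glInf) : ℂ := a.sum fun p c => if p.1 = p.2 then c else 0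

/-- The trace form `⟨a,b⟩ = tr(ab)`. -/
def glForm (a b : glInf) : ℂ := glTr (glMul a b)

/-- The shift map `σ_r`, `σ_r(E_{m,n}) = E_{m+r,n+r}`, as a linear map. -/
def sigmaSh (r : ℤ) : glInf →ₗ[ℂ] glInf :=
  Finsupp.lmapDomain ℂ ℂ fun p : ℤ × ℤ => (p.1 + r, p.2 + r)

/-- The linear map `τ`, `τ(E_{m,n}) = -E_{n,m}`. -/
def tauMap : glInf →ₗ[ℂ] glInf :=
  -(Finsupp.lmapDomain ℂ ℂ fun p : ℤ × ℤ => (p.2, p.1))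

/-- `G_{α,m} = E_{α+m, m-α}`. -/
def G (α m : ℤ) : glInf := E (α + m) (m - α)

/-- The subalgebra `𝒜 = span{E_{m,n} : m+n ∈ 2ℤ}`. -/
def Asub : Submodule ℂ glInf :=
  Submodule.span ℂ {x : glInf | ∃ m n : ℤ, Even (m + n) ∧ x = E m n}

/-- G^τ_{α,m} = G_{α,m} − G_{−α,m} in the fixed-point subalgebra 𝒜^τ. -/
def Gtau (α m : ℤ) : glInf := G α m - G (-α) m

/-- Product of matrix units (single-support case). -/
lemma glMul_single (p q : ℤ × ℤ) (x y : ℂ) :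
    glMul (Finsupp.single p x) (Finsupp.single q y) =
      if p.2 = q.1 then Finsupp.single (p.1, q.2) (x * y) else 0 := by
  unfold glMul
  rw [Finsupp.sum_single_index, Finsupp.sum_single_index]
  · simp
  · rw [Finsupp.sum_single_index] <;> simp

lemma glMul_sub_left (a b c : glInf) : glMul (a - b) c = glMul a c - glMul b c := by
  unfold glMul
  apply Finsupp.sum_sub_index
  intro p c1 c2
  rw [← Finsupp.sum_sub]
  congr 1; ext q d
  split_ifs <;> simp [sub_mul, Finsupp.single_sub]

lemma glMul_sub_right (a b c : glInf) : glMul a (b - c) = glMul a b - glMul a c := by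
  unfold glMul
  rw [← Finsupp.sum_sub]
  apply Finsupp.sum_congr
  intro p _
  apply Finsupp.sum_sub_index
  intro q d1 d2
  split_ifs <;> simp [mul_sub, Finsupp.single_sub]

lemma glBracket_sub_sub (x y z w : glInf) :
    glBracket (x - y) (z - w) =
      glBracket x z - glBracket x w - glBracket y z + glBracket y w := by
  unfold glBracket
  simp only [glMul_sub_left, glMul_sub_right]
  abel

lemma single_eq_single (a b c d : ℤ) (h1 : a = c) (h2 : b = d) :
    (Finsupp.single (a, b) (1 : ℂ) : glInf) = Finsupp.single (c, d) 1 := by rw [h1, h2]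

/-- The commutator of two `G` elements. -/
lemma glBracket_G (a b m n : ℤ) :
    glBracket (G a m) (G b n) =
      (if m - a = n + b then (1 : ℂ) else 0) • G (a + b) (n + a) -
      (if m + a = n - b then (1 : ℂ) else 0) • G (a + b) (b + m) := by
  unfold glBracket G E
  rw [glMul_single, glMul_single]
  simp only [ite_smul, one_smul, zero_smul, one_mul]
  split_ifs <;>
    first
      | rfl
      | (exfalso; omega)
      | (try simp only [sub_zero, zero_sub, sub_self, neg_inj]
         first
           | exact single_eq_single _ _ _ _ (by omega) (by omega)
           | (congr 1 <;> exact single_eq_single _ _ _ _ (by omega) (by omega)))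

lemma ite_smul_G (P : Prop) [Decidable P] (a b a' b' : ℤ) (ha : a = a')
    (hb : P → b = b') :
    (if P then (1 : ℂ) else 0) • G a b = (if P then (1 : ℂ) else 0) • G a' b' := by
  subst ha
  split_ifs with h
  · rw [hb h]
  · simp

/-- The commutator identity for the G^τ elements. -/
theorem Gtau_bracket (α β m n : ℤ) :
    glBracket (Gtau α m) (Gtau β n) =
      (if m - α = n + β then (1 : ℂ) else 0) • Gtau (α + β) (n + α) -
      (if m + α = n - β then (1 : ℂ) else 0) • Gtau (α + β) (β + m) +
      (if m + α = n + β then (1 : ℂ) else 0) • Gtau (α - β) (m - β) -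
      (if m - α = n - β then (1 : ℂ) else 0) • Gtau (α - β) (α + n) := by
  unfold Gtau
  rw [glBracket_sub_sub, glBracket_G, glBracket_G, glBracket_G, glBracket_G]
  simp only [smul_sub,
    show (m - α = n + -β) ↔ (m - α = n - β) from by omega,
    show (m + α = n - -β) ↔ (m + α = n + β) from by omega,
    show (m - -α = n + β) ↔ (m + α = n + β) from by omega,
    show (m + -α = n - β) ↔ (m - α = n - β) from by omega,
    show (m - -α = n + -β) ↔ (m + α = n - β) from by omega,
    show (m + -α = n - -β) ↔ (m - α = n + β) from by omega]
  rw [ite_smul_G (m - α = n + β) (-α + -β) (-β + m) (-(α + β)) (n + α) (by ring)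
      (fun h => by omega),
    ite_smul_G (m + α = n - β) (-α + -β) (n + -α) (-(α + β)) (β + m) (by ring)
      (fun h => by omega),
    ite_smul_G (m + α = n + β) (α + -β) (-β + m) (α - β) (m - β) (by ring)
      (fun h => by omega),
    ite_smul_G (m + α = n + β) (-α + β) (n + -α) (-(α - β)) (m - β) (by ring)
      (fun h => by omega),
    ite_smul_G (m - α = n - β) (α + -β) (n + α) (α - β) (α + n) (by ring)
      (fun h => by omega),
    ite_smul_G (m - α = n - β) (-α + β) (β + m) (-(α - β)) (α + n) (by ring)
      (fun h => by omega)]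
  abel
end
end

section
/- The linear map τ_C on Â_ℏ defined by τ_C(A_{α,m}) = −(−1)^m q^{2α} A_{−α,m} and τ_C(c) = c, where q = e^{iℏ}, is a Lie algebra automorphism of order 2. -/
noncomputable section

open Complex

/-- The index family for the standard basis {A_{α,m}} ∪ {c} of the sine Lie algebra. -/
abbrev sineBasisFun {L : Type*} (A : ℤ → ℤ → L) (c : L) : ℤ × ℤ ⊕ Unit → L :=
  Sum.elim (fun p => A p.1 p.2) fun _ => c

/-- The hypothesis that {A_{α,m}} ∪ {c} is a basis of L. -/
def SineBasis {L : Type*} [AddCommGroup L] [Module ℂ L] (A : ℤ → ℤ → L) (c : L) : Prop :=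
  LinearIndependent ℂ (sineBasisFun A c) ∧
    Submodule.span ℂ (Set.range (sineBasisFun A c)) = ⊤

/-- The defining relations of the sine Lie algebra Â_ℏ (with c central):
[A_{α,m}, A_{β,n}] = 2i sin(ℏ(mβ−nα)) A_{α+β,m+n} + m δ_{α+β,0} δ_{m+n,0} c. -/
def SineRel {L : Type*} [LieRing L] [LieAlgebra ℂ L] (ℏ : ℝ)
    (A : ℤ → ℤ → L) (c : L) : Prop :=
  (∀ x : L, ⁅c, x⁆ = 0) ∧
    ∀ α β m n : ℤ, ⁅A α m, A β n⁆ =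
      (2 * Complex.I *
          Complex.sin ((ℏ : ℂ) * ((m : ℂ) * (β : ℂ) - (n : ℂ) * (α : ℂ)))) •
        A (α + β) (m + n) +
      ((m : ℂ) * (if α + β = 0 then 1 else 0) * (if m + n = 0 then 1 else 0)) • c

/-- The defining relations of Â_ℏ written with q = e^{iℏ}:
[A_{α,m}, A_{β,n}] = (q^{mβ−nα} − q^{nα−mβ}) A_{α+β,m+n} + m δ_{α+β,0} δ_{m+n,0} c. -/
def SineRelQ {L : Type*} [LieRing L] [LieAlgebra ℂ L] (q : ℂ)
    (A : ℤ → ℤ → L) (c : L) : Prop :=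
  (∀ x : L, ⁅c, x⁆ = 0) ∧
    ∀ α β m n : ℤ, ⁅A α m, A β n⁆ =
      (q ^ (m * β - n * α) - q ^ (n * α - m * β)) • A (α + β) (m + n) +
      ((m : ℂ) * (if α + β = 0 then 1 else 0) * (if m + n = 0 then 1 else 0)) • c

/-- The linear map τ_C with τ_C(A_{α,m}) = −(−1)^m q^{2α} A_{−α,m}, τ_C(c) = c, where
q = e^{iℏ}, is a Lie algebra automorphism of Â_ℏ of order 2. -/
theorem tauC_automorphism {L : Type*} [LieRing L] [LieAlgebra ℂ L] (ℏ : ℝ)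
    (A : ℤ → ℤ → L) (c : L) (hbasis : SineBasis A c) (hrel : SineRel ℏ A c)
    (q : ℂ) (hq : q = Complex.exp (Complex.I * (ℏ : ℂ)))
    (τC : L →ₗ[ℂ] L)
    (hτA : ∀ α m : ℤ, τC (A α m) = (-(-1 : ℂ) ^ m * q ^ (2 * α)) • A (-α) m)
    (hτc : τC c = c) :
    (∀ x y : L, τC ⁅x, y⁆ = ⁅τC x, τC y⁆) ∧
    τC ∘ₗ τC = LinearMap.id ∧ τC ≠ LinearMap.id := by
  obtain ⟨hli, hspan⟩ := hbasis
  obtain ⟨hc, hA⟩ := hrel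
  have hq0 : q ≠ 0 := by rw [hq]; exact Complex.exp_ne_zero _
  have hm1 : (-1 : ℂ) ≠ 0 := by norm_num
  let b : Module.Basis (ℤ × ℤ ⊕ Unit) ℂ L := Module.Basis.mk hli (le_of_eq hspan.symm)
  have hb : ∀ i, b i = sineBasisFun A c i := fun i => by simp [b, Module.Basis.mk_apply]
  have key : ∀ i j : ℤ × ℤ ⊕ Unit,
      τC ⁅sineBasisFun A c i, sineBasisFun A c j⁆
        = ⁅τC (sineBasisFun A c i), τC (sineBasisFun A c j)⁆ := by
    rintro (⟨α, m⟩ | _) (⟨β, n⟩ | _)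
    · simp only [sineBasisFun, Sum.elim_inl]
      rw [hA, map_add, map_smul, map_smul, hτA, hτc, hτA, hτA, smul_lie, lie_smul, hA,
        smul_smul, smul_smul, smul_add, smul_smul, smul_smul]
      have harg : ((ℏ : ℂ) * ((m : ℂ) * ((-β : ℤ) : ℂ) - (n : ℂ) * ((-α : ℤ) : ℂ)))
          = -((ℏ : ℂ) * ((m : ℂ) * (β : ℂ) - (n : ℂ) * (α : ℂ))) := by push_cast; ring
      rw [harg, Complex.sin_neg]
      have hneg : (-(α + β)) = -α + -β := by ring
      rw [hneg]
      congr 1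
      · congr 1
        rw [show m + n = m + n from rfl]
        rw [show (2 : ℤ) * (α + β) = 2 * α + 2 * β by ring,
          zpow_add₀ hq0, zpow_add₀ hm1]
        ring
      · by_cases h1 : α + β = 0
        · by_cases h2 : m + n = 0
          · have h1' : -α + -β = 0 := by omega
            have hqq : q ^ (2 * α) * q ^ (2 * β) = 1 := by
              rw [← zpow_add₀ hq0, show 2 * α + 2 * β = 0 by omega, zpow_zero]
            have hmm : (-1 : ℂ) ^ m * (-1 : ℂ) ^ n = 1 := by
              rw [← zpow_add₀ hm1, h2, zpow_zero]
            simp only [h1, h2, h1', if_true, mul_one]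
            congr 1
            rw [show -(-1 : ℂ) ^ m * q ^ (2 * α) * (-(-1 : ℂ) ^ n * q ^ (2 * β)) * (m : ℂ)
                = ((-1 : ℂ) ^ m * (-1 : ℂ) ^ n) * (q ^ (2 * α) * q ^ (2 * β)) * (m : ℂ) by ring,
              hmm, hqq]
            ring
          · have h1' : -α + -β = 0 := by omega
            simp [h1, h2, h1']
        · have h1' : ¬ (-α + -β = 0) := by omega
          simp [h1, h1']
    · simp only [sineBasisFun, Sum.elim_inl, Sum.elim_inr]
      rw [← lie_skew, hc, neg_zero, map_zero, hτc, ← lie_skew, hc, neg_zero]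
    · simp only [sineBasisFun, Sum.elim_inl, Sum.elim_inr]
      rw [hc, map_zero, hτc, hc]
    · simp only [sineBasisFun, Sum.elim_inr]
      rw [hc, map_zero, hτc, hc]
  have main : ∀ x y : L, τC ⁅x, y⁆ = ⁅τC x, τC y⁆ := by
    let B : L →ₗ[ℂ] L →ₗ[ℂ] L := LinearMap.mk₂ ℂ (fun x y => ⁅x, y⁆) add_lie smul_lie lie_add lie_smul
    have hFG : B.compr₂ τC = B.compl₁₂ τC τC := by
      apply b.ext; intro i
      apply b.ext; intro j
      simp only [hb, LinearMap.compr₂_apply, LinearMap.compl₁₂_apply, LinearMap.mk₂_apply, B]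
      exact key i j
    intro x y
    have := LinearMap.congr_fun (LinearMap.congr_fun hFG x) y
    simpa [B] using this
  refine ⟨main, ?_, ?_⟩
  · apply b.ext; intro i
    rcases i with ⟨α, m⟩ | _
    · have hbi : b (Sum.inl (α, m)) = A α m := hb _
      rw [LinearMap.comp_apply, LinearMap.id_apply, hbi, hτA, map_smul, hτA, smul_smul, neg_neg]
      have hcoef : (-(-1 : ℂ) ^ m * q ^ (2 * α)) * (-(-1 : ℂ) ^ m * q ^ (2 * (-α))) = 1 := by
        rw [show (-(-1 : ℂ) ^ m * q ^ (2 * α)) * (-(-1 : ℂ) ^ m * q ^ (2 * (-α)))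
            = ((-1 : ℂ) ^ m * (-1 : ℂ) ^ m) * (q ^ (2 * α) * q ^ (2 * (-α))) by ring,
          ← zpow_add₀ hm1, ← zpow_add₀ hq0, show (2 : ℤ) * α + 2 * (-α) = 0 by ring, zpow_zero,
          mul_one]
        exact Even.neg_one_zpow ⟨m, rfl⟩
      rw [hcoef, one_smul]
    · have hbi : b (Sum.inr ()) = c := hb _
      rw [LinearMap.comp_apply, LinearMap.id_apply, hbi, hτc, hτc]
  · intro h
    have h0 : A 0 0 ≠ 0 := by
      have := hli.ne_zero (Sum.inl (0, 0))
      simpa [sineBasisFun] using this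
    have h1 : τC (A 0 0) = A 0 0 := by rw [h, LinearMap.id_apply]
    rw [hτA] at h1
    simp only [neg_zero, mul_zero, zpow_zero, mul_one] at h1
    have h2 : (2 : ℂ) • A 0 0 = 0 := by
      have : (-1 : ℂ) • A 0 0 = A 0 0 := by simpa using h1
      have h3 : A 0 0 + A 0 0 = 0 := by
        nth_rewrite 1 [← this]; simp [neg_smul]
      rw [two_smul]; simpa using h3
    rcases smul_eq_zero.mp h2 with h4 | h4
    · norm_num at h4
    · exact h0 h4
end
end

section
/- In the fixed-point subalgebra B̂_ℏ of τ_B in Â_ℏ, spanned by B_{α,m} = A_{α,m} − (−1)^m A_{−α,m}, the commutation relation [B_{α,m}, B_{β,n}] = 2i sin(ℏ(mβ−nα)) B_{α+β,m+n} + (−1)^n 2i sin(ℏ(mβ+nα)) B_{α−β,m+n} + 2m(δ_{α+β,0} − (−1)^m δ_{α−β,0}) δ_{m+n,0} c holds for all α,β,m,n ∈ ℤ. -/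
noncomputable section

open Complex

/-- The commutation relations of B̂_ℏ: with B_{α,m} = A_{α,m} − (−1)^m A_{−α,m},
[B_{α,m}, B_{β,n}] = 2i sin(ℏ(mβ−nα)) B_{α+β,m+n}
 + (−1)^n 2i sin(ℏ(mβ+nα)) B_{α−β,m+n}
 + 2m(δ_{α+β,0} − (−1)^m δ_{α−β,0}) δ_{m+n,0} c. -/
theorem B_relations {L : Type*} [LieRing L] [LieAlgebra ℂ L] (ℏ : ℝ)
    (A : ℤ → ℤ → L) (c : L) (hbasis : SineBasis A c) (hrel : SineRel ℏ A c)
    (B : ℤ → ℤ → L)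
    (hB : ∀ α m : ℤ, B α m = A α m - ((-1 : ℂ) ^ m) • A (-α) m) :
    ∀ α β m n : ℤ, ⁅B α m, B β n⁆ =
      (2 * Complex.I *
          Complex.sin ((ℏ : ℂ) * ((m : ℂ) * (β : ℂ) - (n : ℂ) * (α : ℂ)))) •
        B (α + β) (m + n) +
      ((-1 : ℂ) ^ n * (2 * Complex.I *
          Complex.sin ((ℏ : ℂ) * ((m : ℂ) * (β : ℂ) + (n : ℂ) * (α : ℂ))))) •
        B (α - β) (m + n) +
      (2 * (m : ℂ) *
          ((if α + β = 0 then 1 else 0) - (-1 : ℂ) ^ m * (if α - β = 0 then 1 else 0)) *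
          (if m + n = 0 then 1 else 0)) • c := by
  
  intro α β m n
  obtain ⟨hc, hA⟩ := hrel
  have hcr : ∀ x : L, ⁅x, c⁆ = 0 := fun x => by rw [← lie_skew, hc, neg_zero]
  have hne : (-1:ℂ) ≠ 0 := by norm_num
  rw [hB α m, hB β n, hB (α+β) (m+n), hB (α-β) (m+n)]
  simp only [sub_lie, lie_sub, smul_lie, lie_smul, smul_smul]
  rw [hA α β m n, hA α (-β) m n, hA (-α) β m n, hA (-α) (-β) m n]
  have e1 : α + -β = α - β := by ring
  have e2 : -α + β = -(α - β) := by ring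
  have e3 : -α + -β = -(α + β) := by ring
  have s1 : ((ℏ:ℂ) * ((m:ℂ) * ((-β : ℤ):ℂ) - (n:ℂ) * (α:ℂ))) =
      -((ℏ:ℂ) * ((m:ℂ) * (β:ℂ) + (n:ℂ) * (α:ℂ))) := by push_cast; ring
  have s2 : ((ℏ:ℂ) * ((m:ℂ) * ((β : ℤ):ℂ) - (n:ℂ) * ((-α : ℤ):ℂ))) =
      ((ℏ:ℂ) * ((m:ℂ) * (β:ℂ) + (n:ℂ) * (α:ℂ))) := by push_cast; ring
  have s3 : ((ℏ:ℂ) * ((m:ℂ) * ((-β : ℤ):ℂ) - (n:ℂ) * ((-α : ℤ):ℂ))) =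
      -((ℏ:ℂ) * ((m:ℂ) * (β:ℂ) - (n:ℂ) * (α:ℂ))) := by push_cast; ring
  simp only [e1, e2, e3, s1, s2, s3, Complex.sin_neg, neg_eq_zero]
  have hpow : (-1:ℂ) ^ (m + n) = (-1:ℂ) ^ m * (-1:ℂ) ^ n := zpow_add₀ hne m n
  have h3 : (-1:ℂ)^m * (-1:ℂ)^m = 1 := by
    rw [← zpow_add₀ hne, show m + m = 2*m by ring, zpow_mul]
    norm_num
  have h4 : (-1:ℂ)^n * (-1:ℂ)^n = 1 := by
    rw [← zpow_add₀ hne, show n + n = 2*n by ring, zpow_mul]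
    norm_num
  by_cases hmn : m + n = 0
  · have hnn : (-1:ℂ) ^ n = (-1:ℂ) ^ m := by
      have h2 : (-1:ℂ)^n * (-1:ℂ)^m = 1 := by
        rw [← zpow_add₀ hne, show n + m = 0 by omega, zpow_zero]
      have h3 : (-1:ℂ)^m * (-1:ℂ)^m = 1 := by
        rw [← zpow_add₀ hne, show m + m = 2*m by ring, zpow_mul]
        norm_num
      calc (-1:ℂ)^n = (-1:ℂ)^n * ((-1:ℂ)^m * (-1:ℂ)^m) := by rw [h3, mul_one]
        _ = ((-1:ℂ)^n * (-1:ℂ)^m) * (-1:ℂ)^m := by ring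
        _ = (-1:ℂ)^m := by rw [h2, one_mul]
    simp only [hmn, if_true, hpow, hnn]
    match_scalars
    any_goals ring
    · linear_combination ((m:ℂ) * (if α + β = 0 then (1:ℂ) else 0)) * h3
    · linear_combination (-(2 * Complex.I *
          Complex.sin ((ℏ:ℂ) * (m:ℂ) * (β:ℂ) - (ℏ:ℂ) * (n:ℂ) * (α:ℂ)))) * h3
  · simp only [if_neg hmn, hpow]
    match_scalars
    any_goals ring
    · linear_combination (2 * Complex.I *
          Complex.sin ((ℏ:ℂ) * (m:ℂ) * (β:ℂ) + (ℏ:ℂ) * (n:ℂ) * (α:ℂ)) * (-1:ℂ)^m) * h4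
end
end

section
/- Let A be a commutative subalgebra of an associative algebra acting on a vector space E, generated by operators a(n) for n ∈ ℤ, and suppose there is ℓ ∈ ℕ and k ∈ ℤ such that a(n) = 0 on E for n > k and the generating function identity a(x)^{ℓ+1} = 0 holds on E (i.e., for each N ∈ ℤ, the sum over n₁+⋯+n_{ℓ+1} = N of a(n₁)⋯a(n_{ℓ+1}) vanishes on E). Then each operator a(n), n ∈ ℤ, is nilpotent on E whenever E is spanned by A applied to a single vector w with a(p)w = 0 for p > k. -/
noncomputable section

/-- Local nilpotency from the generating-function identity a(x)^{ℓ+1} = 0: if the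
pairwise commuting operators a(n) vanish on E for n > k, the coefficient of x^{-N-...}
in a(x)^{ℓ+1} vanishes on E for every N (a finite sum, since nonzero terms have all
indices in [N − ℓk, k]), and E is spanned by the commutative algebra generated by the
a(n) applied to a vector w with a(p)w = 0 for p > k, then every a(n) is nilpotent
on E. -/
theorem nilpotency_from_generating_function
    {W : Type*} [AddCommGroup W] [Module ℂ W]
    (a : ℤ → Module.End ℂ W) (w : W) (ℓ : ℕ) (k : ℤ)
    (hcomm : ∀ m n : ℤ, Commute (a m) (a n))
    (E : Submodule ℂ W)
    (hE : E = Submodule.span ℂ {x : W | ∃ l : List ℤ, x = (l.map a).prod w})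
    (hw : ∀ p : ℤ, p > k → a p w = 0)
    (hzero : ∀ n : ℤ, n > k → ∀ x ∈ E, a n x = 0)
    (hpow : ∀ N : ℤ, ∀ x ∈ E,
      (∑ f ∈ (Fintype.piFinset fun _ : Fin (ℓ + 1) =>
          Finset.Icc (N - (ℓ : ℤ) * k) k).filter (fun f => (∑ i, f i) = N),
        (List.ofFn fun i => a (f i)).prod x) = 0) :
    ∀ n : ℤ, ∃ N : ℕ, ∀ x ∈ E, ((a n) ^ N) x = 0 := by
  classical
  -- E is invariant under each a m
  have hinv : ∀ m : ℤ, ∀ x ∈ E, a m x ∈ E := by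
    intro m x hx
    rw [hE] at hx ⊢
    induction hx using Submodule.span_induction with
    | mem y hy =>
      obtain ⟨l, rfl⟩ := hy
      apply Submodule.subset_span
      exact ⟨m :: l, by simp [List.prod_cons]⟩
    | zero => simp
    | add y z hy hz ihy ihz => rw [map_add]; exact Submodule.add_mem _ ihy ihz
    | smul c y hy ihy => rw [map_smul]; exact Submodule.smul_mem _ _ ihy
  -- restricted operators
  set b : ℤ → Module.End ℂ E := fun m => (a m).restrict (fun x hx => hinv m x hx) with hb
  have hbapp : ∀ m : ℤ, ∀ x : E, ((b m x : W)) = a m (x : W) := by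
    intro m x; rfl
  have hbcomm : ∀ m n : ℤ, Commute (b m) (b n) := by
    intro m n
    ext x
    have := congrFun (congrArg (fun (g : Module.End ℂ W) => g.toFun) (hcomm m n)) (x : W)
    simpa [Module.End.mul_apply, hbapp] using this
  have hb0 : ∀ n : ℤ, n > k → b n = 0 := by
    intro n hn
    ext x
    simpa [hbapp] using hzero n hn (x : W) x.2
  -- list products of restrictions
  have key : ∀ l : List ℤ, ∀ x : E, (((l.map b).prod x : E) : W) = (l.map a).prod (x : W) := by
    intro l
    induction l with
    | nil => intro x; simp
    | cons m t ih =>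
      intro x
      simp only [List.map_cons, List.prod_cons, Module.End.mul_apply]
      rw [hbapp, ih]
  have hbpow : ∀ N : ℤ,
      (∑ f ∈ (Fintype.piFinset fun _ : Fin (ℓ + 1) =>
          Finset.Icc (N - (ℓ : ℤ) * k) k).filter (fun f => (∑ i, f i) = N),
        (List.ofFn fun i => b (f i)).prod) = 0 := by
    intro N
    ext x
    have h1 := hpow N (x : W) x.2
    have : (((∑ f ∈ (Fintype.piFinset fun _ : Fin (ℓ + 1) =>
          Finset.Icc (N - (ℓ : ℤ) * k) k).filter (fun f => (∑ i, f i) = N),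
        (List.ofFn fun i => b (f i)).prod) x : E) : W) = 0 := by
      rw [LinearMap.sum_apply, Submodule.coe_sum]
      rw [← h1]
      apply Finset.sum_congr rfl
      intro f _
      have : (List.ofFn fun i => b (f i)) = (List.ofFn f).map b := by
        rw [List.map_ofFn]; rfl
      rw [this, key]
      congr 1
      rw [List.map_ofFn]; rfl
    simpa using this
  -- commuting of list products of b's
  have hcommprod : ∀ (l₁ l₂ : List ℤ), Commute ((l₁.map b).prod) ((l₂.map b).prod) := by
    intro l₁ l₂
    apply Commute.list_prod_right
    intro y hy
    apply Commute.list_prod_left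
    intro z hz
    obtain ⟨m, _, rfl⟩ := List.mem_map.mp hz
    obtain ⟨p, _, rfl⟩ := List.mem_map.mp hy
    exact hbcomm m p
  -- product containing a nilpotent factor is nilpotent
  have hnilprod : ∀ (l : List ℤ), (∃ m ∈ l, IsNilpotent (b m)) → IsNilpotent ((l.map b).prod) := by
    intro l
    induction l with
    | nil => rintro ⟨m, hm, _⟩; exact absurd hm List.not_mem_nil
    | cons p t ih =>
      rintro ⟨m, hm, hnil⟩
      rw [List.map_cons, List.prod_cons]
      have hc : Commute (b p) ((t.map b).prod) := by
        apply Commute.list_prod_right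
        intro z hz
        obtain ⟨q, _, rfl⟩ := List.mem_map.mp hz
        exact hbcomm p q
      rcases List.mem_cons.mp hm with h | h
      · subst h
        exact hc.isNilpotent_mul_right hnil
      · exact hc.isNilpotent_mul_left (ih ⟨m, h, hnil⟩)
  -- main claim: each b n is nilpotent
  have main : ∀ d : ℕ, ∀ n : ℤ, (k - n).toNat ≤ d → IsNilpotent (b n) := by
    intro d
    induction d using Nat.strong_induction_on with
    | _ d IH =>
      intro n _
      rcases lt_or_ge k n with hkn | hnk
      · exact ⟨1, by simpa using hb0 n hkn⟩
      · -- n ≤ k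
        set N : ℤ := ((ℓ : ℤ) + 1) * n with hN
        set s := (Fintype.piFinset fun _ : Fin (ℓ + 1) =>
            Finset.Icc (N - (ℓ : ℤ) * k) k).filter (fun f => (∑ i, f i) = N) with hs
        have hlk : (ℓ : ℤ) * n ≤ (ℓ : ℤ) * k :=
          mul_le_mul_of_nonneg_left hnk (by positivity)
        have hconstsum : (∑ _i : Fin (ℓ + 1), n) = N := by
          rw [Finset.sum_const, Finset.card_univ, Fintype.card_fin]
          push_cast [hN]; ring
        have hconstmem : (fun _ : Fin (ℓ + 1) => n) ∈ s := by
          rw [hs, Finset.mem_filter]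
          refine ⟨Fintype.mem_piFinset.mpr fun i => ?_, hconstsum⟩
          rw [Finset.mem_Icc]
          constructor
          · rw [hN]; linarith
          · exact hnk
        have hconstval : (List.ofFn fun _ : Fin (ℓ + 1) => b n).prod = (b n) ^ (ℓ + 1) := by
          rw [List.ofFn_const, List.prod_replicate]
        have heq : (b n) ^ (ℓ + 1) =
            -(∑ f ∈ s.erase (fun _ : Fin (ℓ + 1) => n),
              (List.ofFn fun i => b (f i)).prod) := by
          have h0 : (∑ f ∈ s, (List.ofFn fun i => b (f i)).prod) = 0 := hbpow N
          rw [← Finset.add_sum_erase s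
            (fun f => (List.ofFn fun i => b (f i)).prod) hconstmem] at h0
          beta_reduce at h0
          rw [hconstval] at h0
          exact eq_neg_of_add_eq_zero_left h0
        -- each term in the erased sum is nilpotent
        have hterm : ∀ f ∈ s.erase (fun _ : Fin (ℓ + 1) => n),
            IsNilpotent ((List.ofFn fun i => b (f i)).prod) := by
          intro f hf
          obtain ⟨hne, hfs⟩ := Finset.mem_erase.mp hf
          rw [hs, Finset.mem_filter] at hfs
          obtain ⟨hpi, hsum⟩ := hfs
          have hrange : ∀ i, f i ∈ Finset.Icc (N - (ℓ : ℤ) * k) k :=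
            fun i => Fintype.mem_piFinset.mp hpi i
          -- find an index with f i > n
          have hex : ∃ i, n < f i := by
            by_contra hcon
            push_neg at hcon
            obtain ⟨j, hj⟩ : ∃ j, f j ≠ n := by
              by_contra hall
              push_neg at hall
              exact hne (funext hall)
            have : (∑ i, f i) < ∑ _i : Fin (ℓ + 1), n :=
              Finset.sum_lt_sum (fun i _ => hcon i)
                ⟨j, Finset.mem_univ j, lt_of_le_of_ne (hcon j) hj⟩
            rw [hsum, hconstsum] at this
            exact lt_irrefl _ this
          obtain ⟨i, hi⟩ := hex
          have hik : f i ≤ k := (Finset.mem_Icc.mp (hrange i)).2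
          have hlt : (k - f i).toNat < d := by
            omega
          have hnil : IsNilpotent (b (f i)) :=
            IH (k - f i).toNat hlt (f i) le_rfl
          have : (List.ofFn fun i => b (f i)) = (List.ofFn f).map b := by
            rw [List.map_ofFn]; rfl
          rw [this]
          exact hnilprod (List.ofFn f) ⟨f i, List.mem_ofFn.mpr ⟨i, rfl⟩, hnil⟩
        have hsumnil : IsNilpotent (∑ f ∈ s.erase (fun _ : Fin (ℓ + 1) => n),
            (List.ofFn fun i => b (f i)).prod) := by
          apply Commute.isNilpotent_sum hterm
          intro f g _ _
          have hf : (List.ofFn fun i => b (f i)) = (List.ofFn f).map b := by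
            rw [List.map_ofFn]; rfl
          have hg : (List.ofFn fun i => b (g i)) = (List.ofFn g).map b := by
            rw [List.map_ofFn]; rfl
          rw [hf, hg]
          exact hcommprod _ _
        have hpnil : IsNilpotent ((b n) ^ (ℓ + 1)) := by
          rw [heq]; exact hsumnil.neg
        obtain ⟨M, hM⟩ := hpnil
        exact ⟨(ℓ + 1) * M, by rw [pow_mul]; exact hM⟩
  intro n
  obtain ⟨M, hM⟩ := main (k - n).toNat n le_rfl
  refine ⟨M, fun x hx => ?_⟩
  have hcoe : ∀ (M : ℕ) (y : E), ((((b n) ^ M) y : E) : W) = ((a n) ^ M) (y : W) := by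
    intro M
    induction M with
    | zero => intro y; simp
    | succ M ih =>
      intro y
      rw [pow_succ, pow_succ, Module.End.mul_apply, Module.End.mul_apply, ih, hbapp]
  have := hcoe M ⟨x, hx⟩
  rw [hM] at this
  simpa using this.symm
end
end
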